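/- arXiv:1705.05792 — 4 statements merged into one kernel-verified Lean document; each statement's English description precedes it below -/
import Mathlib

section
/- There exist a constant C and a real number δ with 0 < δ < 1 such that for every A ∈ ℕ, ∫_{[0,1)²} sup_{n ≤ 2^A} |(1/2^A) Σ_{k=0}^{2^A−1} ω_k(x¹) ω_{k+n}(x²)| d(x¹,x²) ≤ C δ^A. -/
open MeasureTheory

/-- The `j`-th binary digit of `x ∈ [0,1)`, using the expansion terminating in zeros. -/
noncomputable def dig (x : ℝ) (j : ℕ) : ℕ := (⌊x * 2 ^ (j + 1)⌋).toNat % 2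

/-- The Walsh–Paley function `ω_n(x) = (−1)^{Σ_j n_j x_j}`. -/
noncomputable def walsh (n : ℕ) (x : ℝ) : ℝ :=
  (-1 : ℝ) ^ (∑ j ∈ Finset.range (n + 1), (n.testBit j).toNat * dig x j)

/-!
Write `c_A(n) = 2^{-A} Σ_{k<2^A} ω_k(x¹) ω_{k+n}(x²)` as a function of the two digit sequences.
Splitting `k` by parity peels off the first digits `x¹₀, x²₀`:
`c_{A+1}(2m) = (1 + (-1)^{x¹₀+x²₀})/2 · c_A(m)` and `c_{A+1}(2m+1)` is half a signed sum of
`c_A(m)` and `c_A(m+1)` (for the shifted sequences). Hence a bound `M` on `|c|` together with a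
bound `P` on the averages of `|c|` at neighbouring indices propagates as `(M, P) ↦ (M, (M+P)/2)`
when the digits agree and `(M, P) ↦ (P, P/2)` when they differ. After `A` steps the bound only
depends on the first `A` digits of `x¹ ⊕ x²`, and `M + √2 P` is an eigenvector of the two
transitions: summing over both choices of a digit multiplies it by `(2+√2)/2`. Averaging over the
`2^A` digit patterns gives `∫ sup_n |c_A(n)| ≤ (1+√2) ((2+√2)/4)^A`.
-/

open Finset
open scoped ENNReal

/-- `walsh n x` is by definition `walshChar n (dig x)`. -/
noncomputable def walshChar (n : ℕ) (d : ℕ → ℕ) : ℝ :=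
  (-1) ^ ∑ j ∈ range (n + 1), (n.testBit j).toNat * d j

lemma walshChar_eq_of_lt_two_pow {n N : ℕ} (d : ℕ → ℕ) (h : n < 2 ^ N) :
    walshChar n d = (-1) ^ ∑ j ∈ range N, (n.testBit j).toNat * d j := by
  have htrunc {M M' : ℕ} (hM : n < 2 ^ M) (hMM' : M ≤ M') :
      ∑ j ∈ range M', (n.testBit j).toNat * d j = ∑ j ∈ range M, (n.testBit j).toNat * d j := by
    refine (sum_subset (range_subset_range.2 hMM') fun j _ hj => ?_).symm
    rw [Nat.testBit_lt_two_pow (hM.trans_le (Nat.pow_le_pow_right two_pos (by simpa using hj)))]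
    simp
  have hn : n < 2 ^ (n + 1) := by have := @Nat.lt_two_pow_self n; rw [pow_succ]; omega
  rcases le_total N (n + 1) with hle | hle
  · rw [walshChar, htrunc h hle]
  · rw [walshChar, htrunc hn hle]

lemma abs_walshChar (n : ℕ) (d : ℕ → ℕ) : |walshChar n d| = 1 := by
  simp [walshChar]

lemma walshChar_two_mul (k : ℕ) (d : ℕ → ℕ) :
    walshChar (2 * k) d = walshChar k (fun j => d (j + 1)) := by
  have hk := @Nat.lt_two_pow_self k
  rw [walshChar_eq_of_lt_two_pow d (N := k + 2) (by rw [pow_succ, pow_succ]; omega),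
    walshChar_eq_of_lt_two_pow _ (N := k + 1) (by rw [pow_succ]; omega), sum_range_succ']
  simp [Nat.testBit_zero, Nat.testBit_succ]

lemma walshChar_two_mul_add_one (k : ℕ) (d : ℕ → ℕ) :
    walshChar (2 * k + 1) d = (-1) ^ d 0 * walshChar k (fun j => d (j + 1)) := by
  have hk := @Nat.lt_two_pow_self k
  rw [walshChar_eq_of_lt_two_pow d (N := k + 2) (by rw [pow_succ, pow_succ]; omega),
    walshChar_eq_of_lt_two_pow _ (N := k + 1) (by rw [pow_succ]; omega), sum_range_succ',
    pow_add, mul_comm]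
  simp [Nat.testBit_succ, show (2 * k + 1) / 2 = k by omega]

lemma sum_range_two_mul {M : Type*} [AddCommMonoid M] (f : ℕ → M) (N : ℕ) :
    ∑ k ∈ range (2 * N), f k = ∑ k ∈ range N, (f (2 * k) + f (2 * k + 1)) := by
  induction N with
  | zero => simp
  | succ N ih => rw [Nat.mul_succ, sum_range_succ, sum_range_succ, sum_range_succ, ih, add_assoc]

noncomputable def walshCorr (A n : ℕ) (d e : ℕ → ℕ) : ℝ :=
  (2 ^ A : ℝ)⁻¹ * ∑ k ∈ range (2 ^ A), walshChar k d * walshChar (k + n) e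

section walshCorr

variable (A m : ℕ) (d e : ℕ → ℕ)

lemma abs_walshCorr_zero (n : ℕ) : |walshCorr 0 n d e| = 1 := by
  simp [walshCorr, abs_walshChar]

lemma walshCorr_succ_two_mul :
    walshCorr (A + 1) (2 * m) d e =
      (1 + (-1) ^ (d 0 + e 0)) / 2 * walshCorr A m (fun j => d (j + 1)) (fun j => e (j + 1)) := by
  simp only [walshCorr, pow_succ', mul_inv, sum_range_two_mul, mul_sum]
  refine sum_congr rfl fun k _ => ?_
  rw [show 2 * k + 2 * m = 2 * (k + m) by ring, show 2 * k + 1 + 2 * m = 2 * (k + m) + 1 by ring,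
    walshChar_two_mul, walshChar_two_mul, walshChar_two_mul_add_one, walshChar_two_mul_add_one,
    pow_add]
  ring

lemma walshCorr_succ_two_mul_add_one :
    walshCorr (A + 1) (2 * m + 1) d e =
      ((-1) ^ e 0 * walshCorr A m (fun j => d (j + 1)) (fun j => e (j + 1)) +
        (-1) ^ d 0 * walshCorr A (m + 1) (fun j => d (j + 1)) (fun j => e (j + 1))) / 2 := by
  simp only [walshCorr, pow_succ', mul_inv, sum_range_two_mul, mul_sum]
  rw [add_div, sum_div, sum_div, ← sum_add_distrib]
  refine sum_congr rfl fun k _ => ?_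
  rw [show 2 * k + (2 * m + 1) = 2 * (k + m) + 1 by ring,
    show 2 * k + 1 + (2 * m + 1) = 2 * (k + (m + 1)) by ring,
    walshChar_two_mul, walshChar_two_mul, walshChar_two_mul_add_one, walshChar_two_mul_add_one]
  ring

lemma abs_walshCorr_succ_two_mul_add_one_le :
    |walshCorr (A + 1) (2 * m + 1) d e| ≤
      (|walshCorr A m (fun j => d (j + 1)) (fun j => e (j + 1))| +
        |walshCorr A (m + 1) (fun j => d (j + 1)) (fun j => e (j + 1))|) / 2 := by
  rw [walshCorr_succ_two_mul_add_one, abs_div, abs_two]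
  gcongr
  refine (abs_add_le _ _).trans_eq ?_
  simp [abs_mul]

end walshCorr

def PairBounded (c : ℕ → ℝ) (N : ℕ) (M P : ℝ) : Prop :=
  (∀ n ≤ N, |c n| ≤ M) ∧ ∀ m < N, |c m| + |c (m + 1)| ≤ 2 * P

namespace PairBounded

variable {c c' : ℕ → ℝ} {N : ℕ} {M P : ℝ}

lemma of_agree (hc : PairBounded c N M P) (heven : ∀ m, |c' (2 * m)| ≤ |c m|)
    (hodd : ∀ m, |c' (2 * m + 1)| ≤ (|c m| + |c (m + 1)|) / 2) :
    PairBounded c' (2 * N) M ((M + P) / 2) := by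
  obtain ⟨hM, hP⟩ := hc
  refine ⟨fun n hn => ?_, fun n hn => ?_⟩ <;> obtain ⟨m, rfl | rfl⟩ := Nat.even_or_odd' n
  · exact (heven m).trans (hM m (by omega))
  · linarith [hodd m, hM m (by omega), hM (m + 1) (by omega)]
  · linarith [heven m, hodd m, hP m (by omega), hM m (by omega)]
  · have := heven (m + 1)
    rw [show 2 * (m + 1) = 2 * m + 1 + 1 by ring] at this
    linarith [hodd m, hP m (by omega), hM (m + 1) (by omega)]

lemma of_disagree (hc : PairBounded c N M P) (hP0 : 0 ≤ P) (heven : ∀ m, c' (2 * m) = 0)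
    (hodd : ∀ m, |c' (2 * m + 1)| ≤ (|c m| + |c (m + 1)|) / 2) :
    PairBounded c' (2 * N) P (P / 2) := by
  obtain ⟨-, hP⟩ := hc
  refine ⟨fun n hn => ?_, fun n hn => ?_⟩ <;> obtain ⟨m, rfl | rfl⟩ := Nat.even_or_odd' n
  · simpa [heven] using hP0
  · linarith [hodd m, hP m (by omega)]
  · simpa [heven] using (hodd m).trans (by linarith [hP m (by omega)])
  · have := heven (m + 1)
    rw [show 2 * (m + 1) = 2 * m + 1 + 1 by ring] at this
    simpa [this] using (hodd m).trans (by linarith [hP m (by omega)])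

end PairBounded

/-- `s j` says whether the `j`-th digits disagree; the value is a pair `(M, P)` as in
`PairBounded`. -/
noncomputable def corrBound : ℕ → (ℕ → Bool) → ℝ × ℝ
  | 0, _ => (1, 1)
  | A + 1, s =>
    let q := corrBound A (fun j => s (j + 1))
    if s 0 then (q.2, q.2 / 2) else (q.1, (q.1 + q.2) / 2)

lemma corrBound_nonneg (A : ℕ) (s : ℕ → Bool) :
    0 ≤ (corrBound A s).1 ∧ 0 ≤ (corrBound A s).2 := by
  induction A generalizing s with
  | zero => simp [corrBound]
  | succ A ih =>
    obtain ⟨h1, h2⟩ := ih fun j => s (j + 1)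
    simp only [corrBound]
    split_ifs <;> exact ⟨by linarith, by linarith⟩

lemma corrBound_congr {A : ℕ} {s t : ℕ → Bool} (h : ∀ j < A, s j = t j) :
    corrBound A s = corrBound A t := by
  induction A generalizing s t with
  | zero => rfl
  | succ A ih => simp only [corrBound, h 0 A.succ_pos, ih fun j hj => h (j + 1) (by omega)]

def digitMismatch (d e : ℕ → ℕ) (j : ℕ) : Bool := decide (Odd (d j + e j))

lemma pairBounded_walshCorr (A : ℕ) (d e : ℕ → ℕ) :
    PairBounded (fun n => walshCorr A n d e) (2 ^ A)
      (corrBound A (digitMismatch d e)).1 (corrBound A (digitMismatch d e)).2 := by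
  induction A generalizing d e with
  | zero => simp [PairBounded, abs_walshCorr_zero, corrBound]; norm_num
  | succ A ih =>
    have hodd := (abs_walshCorr_succ_two_mul_add_one_le A · d e)
    rw [pow_succ', corrBound]
    rcases Nat.even_or_odd (d 0 + e 0) with h | h
    · have hs : digitMismatch d e 0 = false := by simpa [digitMismatch] using h
      simp only [hs]
      refine (ih _ _).of_agree (fun m => ?_) hodd
      simp [walshCorr_succ_two_mul, h.neg_one_pow]
    · have hs : digitMismatch d e 0 = true := by simpa [digitMismatch] using h
      simp only [hs]
      refine (ih _ _).of_disagree (corrBound_nonneg _ _).2 (fun m => ?_) hodd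
      simp [walshCorr_succ_two_mul, h.neg_one_pow]

/-- The `j`-th binary digit of `z / 2 ^ A` (for `j < A`). -/
def dyadicDigit (A z j : ℕ) : Bool := z.testBit (A - 1 - j)

lemma dig_eq_dyadicDigit (x : ℝ) {A j : ℕ} (hj : j < A) :
    dig x j = (dyadicDigit A ⌊x * 2 ^ A⌋₊ j).toNat := by
  have hscale : x * 2 ^ (j + 1) = x * 2 ^ A / ((2 ^ (A - 1 - j) : ℕ) : ℝ) := by
    rw [eq_div_iff (by positivity), Nat.cast_pow, Nat.cast_ofNat, mul_assoc, ← pow_add,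
      show j + 1 + (A - 1 - j) = A by omega]
  rw [dig, Int.floor_toNat, hscale, Nat.floor_div_natCast, dyadicDigit, Nat.toNat_testBit]

lemma digitMismatch_dig (x y : ℝ) {A j : ℕ} (hj : j < A) :
    digitMismatch (dig x) (dig y) j = dyadicDigit A (⌊x * 2 ^ A⌋₊ ^^^ ⌊y * 2 ^ A⌋₊) j := by
  have hbool : ∀ b b' : Bool, decide (Odd (b.toNat + b'.toNat)) = (b ^^ b') := by decide
  rw [digitMismatch, dig_eq_dyadicDigit x hj, dig_eq_dyadicDigit y hj, hbool]
  simp only [dyadicDigit, Nat.testBit_xor]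

lemma abs_walshCorr_dig_le (x y : ℝ) {A n : ℕ} (hn : n ≤ 2 ^ A) :
    |walshCorr A n (dig x) (dig y)| ≤
      (corrBound A (dyadicDigit A (⌊x * 2 ^ A⌋₊ ^^^ ⌊y * 2 ^ A⌋₊))).1 := by
  rw [← corrBound_congr fun j hj => digitMismatch_dig x y hj]
  exact (pairBounded_walshCorr A (dig x) (dig y)).1 n hn

lemma corrBound_succ_dyadicDigit {A z : ℕ} (hz : z < 2 ^ A) :
    corrBound (A + 1) (dyadicDigit (A + 1) z) =
      ((corrBound A (dyadicDigit A z)).1,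
        ((corrBound A (dyadicDigit A z)).1 + (corrBound A (dyadicDigit A z)).2) / 2) := by
  have hshift : (fun j => dyadicDigit (A + 1) z (j + 1)) = dyadicDigit A z := by
    funext j; simp only [dyadicDigit]; congr 1; omega
  simp only [corrBound, hshift]
  simp [dyadicDigit, Nat.testBit_lt_two_pow hz]

lemma corrBound_succ_dyadicDigit_two_pow_add {A z : ℕ} (hz : z < 2 ^ A) :
    corrBound (A + 1) (dyadicDigit (A + 1) (2 ^ A + z)) =
      ((corrBound A (dyadicDigit A z)).2, (corrBound A (dyadicDigit A z)).2 / 2) := by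
  have hshift : corrBound A (fun j => dyadicDigit (A + 1) (2 ^ A + z) (j + 1)) =
      corrBound A (dyadicDigit A z) := by
    refine corrBound_congr fun j hj => ?_
    simp only [dyadicDigit]
    rw [show A + 1 - 1 - (j + 1) = A - 1 - j by omega, Nat.testBit_two_pow_add_gt (by omega)]
  simp only [corrBound, hshift]
  simp [dyadicDigit, Nat.testBit_two_pow_add_eq, Nat.testBit_lt_two_pow hz]

lemma sum_corrBound_dyadicDigit (A : ℕ) :
    ∑ z ∈ range (2 ^ A),
        ((corrBound A (dyadicDigit A z)).1 + √2 * (corrBound A (dyadicDigit A z)).2) =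
      (1 + √2) * ((2 + √2) / 2) ^ A := by
  induction A with
  | zero => simp [corrBound]
  | succ A ih =>
    have hsqrt : √2 * √2 = 2 := Real.mul_self_sqrt zero_le_two
    rw [pow_succ, pow_succ, ← mul_assoc, ← ih, sum_mul, mul_two, sum_range_add,
      ← sum_add_distrib]
    refine sum_congr rfl fun z hz => ?_
    rw [corrBound_succ_dyadicDigit (mem_range.1 hz),
      corrBound_succ_dyadicDigit_two_pow_add (mem_range.1 hz)]
    linear_combination (-(corrBound A (dyadicDigit A z)).2 / 2) * hsqrt

lemma sum_corrBound_fst_le (A : ℕ) :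
    ∑ z ∈ range (2 ^ A), (corrBound A (dyadicDigit A z)).1 ≤ (1 + √2) * ((2 + √2) / 2) ^ A := by
  rw [← sum_corrBound_dyadicDigit]
  exact sum_le_sum fun z _ =>
    le_add_of_nonneg_right (mul_nonneg (Real.sqrt_nonneg 2) (corrBound_nonneg A _).2)

lemma floor_mul_preimage_inter_Ico_of_lt {N i : ℕ} (hi : i < N) :
    (fun x : ℝ => ⌊x * N⌋₊) ⁻¹' {i} ∩ Set.Ico 0 1 = Set.Ico (i / N : ℝ) ((i + 1) / N) := by
  have hN : (0 : ℝ) < N := Nat.cast_pos.2 (by omega)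
  have hiN : (i : ℝ) + 1 ≤ N := by exact_mod_cast hi
  ext x
  simp only [Set.mem_inter_iff, Set.mem_preimage, Set.mem_singleton_iff, Set.mem_Ico,
    div_le_iff₀ hN, lt_div_iff₀ hN]
  constructor
  · rintro ⟨hfl, hx0, -⟩
    exact (Nat.floor_eq_iff (by positivity)).1 hfl
  · rintro ⟨hlo, hhi⟩
    have hx0 : 0 ≤ x := nonneg_of_mul_nonneg_left ((Nat.cast_nonneg i).trans hlo) hN
    exact ⟨(Nat.floor_eq_iff (by positivity)).2 ⟨hlo, hhi⟩, hx0, by nlinarith⟩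

lemma floor_mul_preimage_inter_Ico_of_le {N i : ℕ} (hN : 0 < N) (hi : N ≤ i) :
    (fun x : ℝ => ⌊x * N⌋₊) ⁻¹' {i} ∩ Set.Ico 0 1 = ∅ := by
  refine Set.eq_empty_of_forall_notMem fun x ⟨hfl, hx0, hx1⟩ => ?_
  have hN' : (0 : ℝ) < N := Nat.cast_pos.2 hN
  have : ⌊x * N⌋₊ < N := (Nat.floor_lt (by positivity)).2 (by nlinarith)
  simp only [Set.mem_preimage, Set.mem_singleton_iff] at hfl
  omega

lemma volume_floor_mul_preimage_inter_Ico {N : ℕ} (hN : 0 < N) (i : ℕ) :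
    volume ((fun x : ℝ => ⌊x * N⌋₊) ⁻¹' {i} ∩ Set.Ico 0 1) =
      if i < N then (N : ℝ≥0∞)⁻¹ else 0 := by
  split_ifs with hi
  · rw [floor_mul_preimage_inter_Ico_of_lt hi, Real.volume_Ico, ← sub_div, add_sub_cancel_left,
      ENNReal.ofReal_div_of_pos (Nat.cast_pos.2 hN), ENNReal.ofReal_one, ENNReal.ofReal_natCast,
      one_div]
  · rw [floor_mul_preimage_inter_Ico_of_le hN (not_lt.1 hi), measure_empty]

lemma setLIntegral_unitSquare_comp_floor {N : ℕ} (hN : 0 < N) (f : ℕ × ℕ → ℝ≥0∞) :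
    ∫⁻ p in Set.Ico (0 : ℝ) 1 ×ˢ Set.Ico (0 : ℝ) 1, f (⌊p.1 * N⌋₊, ⌊p.2 * N⌋₊) =
      ∑ q ∈ range N ×ˢ range N, f q * ((N : ℝ≥0∞)⁻¹ * (N : ℝ≥0∞)⁻¹) := by
  set g : ℝ → ℕ := fun x => ⌊x * N⌋₊
  have hg : Measurable (Prod.map g g) :=
    (Nat.measurable_floor.comp (measurable_id.mul_const _)).prodMap
      (Nat.measurable_floor.comp (measurable_id.mul_const _))
  have hcell (q : ℕ × ℕ) :
      (volume.restrict (Set.Ico (0 : ℝ) 1 ×ˢ Set.Ico (0 : ℝ) 1)).map (Prod.map g g) {q} =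
        (if q.1 < N then (N : ℝ≥0∞)⁻¹ else 0) * (if q.2 < N then (N : ℝ≥0∞)⁻¹ else 0) := by
    rw [Measure.map_apply hg (measurableSet_singleton q),
      Measure.restrict_apply (hg (measurableSet_singleton q)), ← Set.singleton_prod_singleton,
      Set.preimage_prod_map_prod, Set.prod_inter_prod, Measure.volume_eq_prod, Measure.prod_prod,
      volume_floor_mul_preimage_inter_Ico hN, volume_floor_mul_preimage_inter_Ico hN]
  change ∫⁻ p in _, f (Prod.map g g p) = _
  rw [← lintegral_map (measurable_of_countable f) hg, lintegral_countable',
    tsum_eq_sum (s := range N ×ˢ range N)]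
  · refine sum_congr rfl fun q hq => ?_
    obtain ⟨h1, h2⟩ := mem_product.1 hq
    rw [hcell, if_pos (mem_range.1 h1), if_pos (mem_range.1 h2)]
  · intro q hq
    rw [mem_product, mem_range, mem_range, not_and_or] at hq
    rcases hq with hq | hq <;> simp [hcell, hq]

lemma sum_range_two_pow_xor {M : Type*} [AddCommMonoid M] {A i : ℕ} (hi : i < 2 ^ A)
    (F : ℕ → M) : ∑ z ∈ range (2 ^ A), F (i ^^^ z) = ∑ z ∈ range (2 ^ A), F z := by
  have hinv (z : ℕ) : i ^^^ (i ^^^ z) = z := by rw [← Nat.xor_assoc, Nat.xor_self, Nat.zero_xor]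
  refine sum_nbij' (i ^^^ ·) (i ^^^ ·) (fun z hz => ?_) (fun z hz => ?_) (fun z _ => hinv z)
    (fun z _ => hinv z) (fun z _ => rfl)
  all_goals simpa using Nat.xor_lt_two_pow hi (mem_range.1 hz)

lemma sum_product_range_two_pow_xor {M : Type*} [AddCommMonoid M] (A : ℕ) (F : ℕ → M) :
    ∑ q ∈ range (2 ^ A) ×ˢ range (2 ^ A), F (q.1 ^^^ q.2) = 2 ^ A • ∑ z ∈ range (2 ^ A), F z := by
  rw [sum_product, sum_congr rfl fun i hi => sum_range_two_pow_xor (mem_range.1 hi) F, sum_const,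
    card_range]

lemma setLIntegral_unitSquare_comp_xor_floor (A : ℕ) {F : ℕ → ℝ} (hF : ∀ z, 0 ≤ F z) :
    ∫⁻ p in Set.Ico (0 : ℝ) 1 ×ˢ Set.Ico (0 : ℝ) 1,
        ENNReal.ofReal (F (⌊p.1 * 2 ^ A⌋₊ ^^^ ⌊p.2 * 2 ^ A⌋₊)) =
      ENNReal.ofReal ((2 ^ A : ℝ)⁻¹ * ∑ z ∈ range (2 ^ A), F z) := by
  have hcancel : (2 ^ A : ℝ≥0∞)⁻¹ * 2 ^ A = 1 :=
    ENNReal.inv_mul_cancel (by positivity) (ENNReal.pow_ne_top ENNReal.ofNat_ne_top)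
  have hsquare := setLIntegral_unitSquare_comp_floor (N := 2 ^ A) (by positivity)
    fun q => ENNReal.ofReal (F (q.1 ^^^ q.2))
  simp only [Nat.cast_pow, Nat.cast_ofNat] at hsquare
  rw [hsquare, ← sum_mul, sum_product_range_two_pow_xor A fun z => ENNReal.ofReal (F z),
    nsmul_eq_mul, ← ENNReal.ofReal_sum_of_nonneg fun z _ => hF z,
    ENNReal.ofReal_mul (by positivity), ENNReal.ofReal_inv_of_pos (by positivity),
    ENNReal.ofReal_pow zero_le_two, ENNReal.ofReal_ofNat, Nat.cast_pow, Nat.cast_ofNat, mul_comm,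
    ← mul_assoc, mul_assoc _ (2 ^ A)⁻¹, hcancel, mul_one]

/-- There exist `C` and `δ ∈ (0,1)` such that for every `A ∈ ℕ`,
`∫_{[0,1)²} sup_{n ≤ 2^A} |2^{−A} Σ_{k<2^A} ω_k(x¹) ω_{k+n}(x²)| dx ≤ C δ^A`. -/
theorem walsh_product_decay :
    ∃ C : ℝ, 0 < C ∧ ∃ δ : ℝ, 0 < δ ∧ δ < 1 ∧ ∀ A : ℕ,
      ∫⁻ x in Set.Ico (0 : ℝ) 1 ×ˢ Set.Ico (0 : ℝ) 1,
        ⨆ (n : ℕ) (_ : n ≤ 2 ^ A),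
          ENNReal.ofReal
            |(2 ^ A : ℝ)⁻¹ * ∑ k ∈ Finset.range (2 ^ A), walsh k x.1 * walsh (k + n) x.2|
      ≤ ENNReal.ofReal (C * δ ^ A) := by
  have hsqrt : √2 < 2 := by rw [Real.sqrt_lt' two_pos]; norm_num
  refine ⟨1 + √2, by positivity, (2 + √2) / 4, by positivity, by linarith, fun A => ?_⟩
  refine (lintegral_mono fun p => iSup₂_le fun n hn =>
    ENNReal.ofReal_le_ofReal (abs_walshCorr_dig_le p.1 p.2 hn)).trans ?_
  rw [setLIntegral_unitSquare_comp_xor_floor A fun z => (corrBound_nonneg A _).1]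
  refine ENNReal.ofReal_le_ofReal <|
    (mul_le_mul_of_nonneg_left (sum_corrBound_fst_le A) (by positivity)).trans_eq ?_
  rw [show (2 + √2) / 4 = (2 + √2) / 2 / 2 by ring, div_pow (_ / 2)]
  ring
end

section
/- Let n, k, l, i ∈ ℕ and suppose there exists a positive integer s such that the s-th binary blocks satisfy (n_{4s−1},n_{4s−2},n_{4s−3},n_{4s−4}) = (0,0,1,0), (k_{4s−1},k_{4s−2},k_{4s−3},k_{4s−4}) = (0,0,0,0), (l_{4s−1},l_{4s−2},l_{4s−3},l_{4s−4}) = (0,0,1,0) and (i_{4s−1},i_{4s−2},i_{4s−3},i_{4s−4}) = (0,1,0,0), where m_j denotes the j-th binary digit of m. Then (k+n) ⊕ (l+n) ⊕ (i+n) ≠ (k ⊕ l ⊕ i) + n. -/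
/-!
Look at the `s`-th block of four bits, starting at bit `m = 4s - 4`. There `n`, `k`, `l`, `i`
read `2, 0, 2, 4`, so `k ⊕ l ⊕ i` reads `6`. Adding `n` adds `2` to a block, plus an incoming
carry `c ∈ {0, 1}`: the blocks of `k + n`, `l + n`, `i + n` lie in `{2, 3}`, `{4, 5}`, `{6, 7}`, so
bit `m + 3` is `0` in all three and hence in their XOR, whereas the block of `(k ⊕ l ⊕ i) + n` is
`8` or `9`, whose bit `3` is `1`.
-/

namespace Nat

def bitBlock (x m w : ℕ) : ℕ := x / 2 ^ m % 2 ^ w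

variable {x y m w j : ℕ}

theorem bitBlock_lt : bitBlock x m w < 2 ^ w :=
  mod_lt _ (Nat.two_pow_pos w)

theorem testBit_bitBlock (hj : j < w) : (bitBlock x m w).testBit j = x.testBit (m + j) := by
  simp [bitBlock, testBit_mod_two_pow, testBit_div_two_pow, hj, Nat.add_comm]

theorem bitBlock_eq_iff {v : ℕ} (hv : v < 2 ^ w) :
    bitBlock x m w = v ↔ ∀ j < w, x.testBit (m + j) = v.testBit j := by
  refine ⟨fun h j hj => by rw [← testBit_bitBlock hj, h], fun h => eq_of_testBit_eq fun j => ?_⟩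
  rcases lt_or_ge j w with hj | hj
  · rw [testBit_bitBlock hj, h j hj]
  · rw [testBit_lt_two_pow (bitBlock_lt.trans_le (Nat.pow_le_pow_right two_pos hj)),
      testBit_lt_two_pow (hv.trans_le (Nat.pow_le_pow_right two_pos hj))]

theorem bitBlock_xor : bitBlock (x ^^^ y) m w = bitBlock x m w ^^^ bitBlock y m w := by
  simp only [bitBlock, xor_div_two_pow, xor_mod_two_pow]

theorem exists_bitBlock_add :
    ∃ c ≤ 1, bitBlock (x + y) m w = (bitBlock x m w + bitBlock y m w + c) % 2 ^ w := by
  refine ⟨if 2 ^ m ≤ x % 2 ^ m + y % 2 ^ m then 1 else 0, by split <;> simp, ?_⟩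
  rw [bitBlock, Nat.add_div (Nat.two_pow_pos m)]
  exact (((mod_modEq _ _).add (mod_modEq _ _)).add_right _).symm

theorem testBit_add_of_bitBlock {u v : ℕ} (hj : j < w) (hx : bitBlock x m w = u)
    (hy : bitBlock y m w = v)
    (hcarry : ((u + v) % 2 ^ w).testBit j = ((u + v + 1) % 2 ^ w).testBit j) :
    (x + y).testBit (m + j) = ((u + v) % 2 ^ w).testBit j := by
  obtain ⟨c, hc, hsum⟩ := exists_bitBlock_add (x := x) (y := y) (m := m) (w := w)
  rw [← testBit_bitBlock hj, hsum, hx, hy]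
  interval_cases c
  · rfl
  · exact hcarry.symm

end Nat

/-- If some binary block of `(n,k,l,i)` has the excluded pattern
`((0,0,1,0),(0,0,0,0),(0,0,1,0),(0,1,0,0))`, then
`(k+n) ⊕ (l+n) ⊕ (i+n) ≠ (k ⊕ l ⊕ i) + n`, where `⊕` is bitwise XOR. -/
theorem xor_add_block_pattern (n k l i : ℕ)
    (h : ∃ s : ℕ, 0 < s ∧
      n.testBit (4 * s - 1) = false ∧ n.testBit (4 * s - 2) = false ∧
      n.testBit (4 * s - 3) = true ∧ n.testBit (4 * s - 4) = false ∧
      k.testBit (4 * s - 1) = false ∧ k.testBit (4 * s - 2) = false ∧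
      k.testBit (4 * s - 3) = false ∧ k.testBit (4 * s - 4) = false ∧
      l.testBit (4 * s - 1) = false ∧ l.testBit (4 * s - 2) = false ∧
      l.testBit (4 * s - 3) = true ∧ l.testBit (4 * s - 4) = false ∧
      i.testBit (4 * s - 1) = false ∧ i.testBit (4 * s - 2) = true ∧
      i.testBit (4 * s - 3) = false ∧ i.testBit (4 * s - 4) = false) :
    (k + n) ^^^ (l + n) ^^^ (i + n) ≠ (k ^^^ l ^^^ i) + n := by
  obtain ⟨s, hs, hn₃, hn₂, hn₁, hn₀, hk₃, hk₂, hk₁, hk₀,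
    hl₃, hl₂, hl₁, hl₀, hi₃, hi₂, hi₁, hi₀⟩ := h
  obtain ⟨m, hm⟩ : ∃ m, 4 * s = m + 4 := ⟨4 * s - 4, by omega⟩
  simp only [hm, Nat.add_sub_cancel] at *
  have hn : Nat.bitBlock n m 4 = 2 :=
    (Nat.bitBlock_eq_iff (by norm_num)).2 fun j hj => by interval_cases j <;> assumption
  have hk : Nat.bitBlock k m 4 = 0 :=
    (Nat.bitBlock_eq_iff (by norm_num)).2 fun j hj => by interval_cases j <;> assumption
  have hl : Nat.bitBlock l m 4 = 2 :=
    (Nat.bitBlock_eq_iff (by norm_num)).2 fun j hj => by interval_cases j <;> assumption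
  have hi : Nat.bitBlock i m 4 = 4 :=
    (Nat.bitBlock_eq_iff (by norm_num)).2 fun j hj => by interval_cases j <;> assumption
  have hkli : Nat.bitBlock (k ^^^ l ^^^ i) m 4 = 6 := by
    rw [Nat.bitBlock_xor, Nat.bitBlock_xor, hk, hl, hi]; rfl
  have hkn := Nat.testBit_add_of_bitBlock (j := 3) (by norm_num) hk hn (by decide)
  have hln := Nat.testBit_add_of_bitBlock (j := 3) (by norm_num) hl hn (by decide)
  have hin := Nat.testBit_add_of_bitBlock (j := 3) (by norm_num) hi hn (by decide)
  have hklin := Nat.testBit_add_of_bitBlock (j := 3) (by norm_num) hkli hn (by decide)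
  intro heq
  have := congrArg (Nat.testBit · (m + 3)) heq
  simp only [Nat.testBit_xor, hkn, hln, hin, hklin] at this
  exact absurd this (by decide)
end

section
/- For every A ∈ ℕ, the number of quadruples (n,k,l,i) ∈ {0,1,…,2^A−1}⁴ satisfying (k+n) ⊕ (l+n) ⊕ (i+n) = (k ⊕ l ⊕ i) + n is at most (2^{16}−1)^{⌊A/4⌋} · 2^{12}. -/
/-!
Say that a quadruple solves the identity modulo `2 ^ m` if both sides agree modulo `2 ^ m`.
Write every coordinate as `p + 2 ^ m * y` with `p < 2 ^ m`. Modulo `2 ^ (m + j)` the identity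
splits into the identity modulo `2 ^ m` for the low parts `p`, and an identity modulo `2 ^ j`
for the high parts `y` in which `p` only enters through four carries in `{0, 1}`. For `j = 4`
and every choice of carries the block `(n, k, l, i) = (1, 0, 2, 5)` violates it, so every
solution modulo `2 ^ m` lifts to at most `2 ^ 16 - 1` solutions modulo `2 ^ (m + 4)`; the last
`A % 4 ≤ 3` bits cost a factor of at most `2 ^ 12`.
-/

open Finset

lemma Nat.ModEq.xor {m a a' b b' : ℕ} (ha : a ≡ a' [MOD 2 ^ m])
    (hb : b ≡ b' [MOD 2 ^ m]) : a ^^^ b ≡ a' ^^^ b' [MOD 2 ^ m] := by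
  unfold Nat.ModEq at *
  rw [Nat.xor_mod_two_pow, Nat.xor_mod_two_pow, ha, hb]

lemma Nat.add_div_eq_add_carry (a b d : ℕ) :
    (a + b) / d = a / d + b / d + (a % d + b % d) / d := by
  rcases Nat.eq_zero_or_pos d with rfl | hd
  · simp
  conv_lhs => rw [← Nat.div_add_mod a d, ← Nat.div_add_mod b d]
  rw [show d * (a / d) + a % d + (d * (b / d) + b % d)
      = (a % d + b % d) + d * (a / d + b / d) by ring, Nat.add_mul_div_left _ _ hd]
  ring

namespace XorAdd

def box (N : ℕ) : Finset (ℕ × ℕ × ℕ × ℕ) := range N ×ˢ range N ×ˢ range N ×ˢ range N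

lemma mem_box {N : ℕ} {q : ℕ × ℕ × ℕ × ℕ} :
    q ∈ box N ↔ q.1 < N ∧ q.2.1 < N ∧ q.2.2.1 < N ∧ q.2.2.2 < N := by
  simp [box]

lemma card_box (N : ℕ) : #(box N) = N ^ 4 := by
  simp [box]
  ring

def mapQuad (f : ℕ → ℕ) (q : ℕ × ℕ × ℕ × ℕ) : ℕ × ℕ × ℕ × ℕ :=
  (f q.1, f q.2.1, f q.2.2.1, f q.2.2.2)

lemma eq_of_mapQuad_mod_eq_of_mapQuad_div_eq {d : ℕ} {x y : ℕ × ℕ × ℕ × ℕ}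
    (hmod : mapQuad (· % d) x = mapQuad (· % d) y)
    (hdiv : mapQuad (· / d) x = mapQuad (· / d) y) : x = y := by
  obtain ⟨x₁, x₂, x₃, x₄⟩ := x
  obtain ⟨y₁, y₂, y₃, y₄⟩ := y
  simp only [mapQuad, Prod.mk.injEq] at hmod hdiv
  obtain ⟨m₁, m₂, m₃, m₄⟩ := hmod
  obtain ⟨d₁, d₂, d₃, d₄⟩ := hdiv
  simp only [Prod.mk.injEq]
  exact ⟨Nat.ext_div_mod d₁ m₁, Nat.ext_div_mod d₂ m₂, Nat.ext_div_mod d₃ m₃,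
    Nat.ext_div_mod d₄ m₄⟩

lemma mapQuad_mod_mem_box (m : ℕ) (q : ℕ × ℕ × ℕ × ℕ) :
    mapQuad (· % 2 ^ m) q ∈ box (2 ^ m) := by
  have := Nat.two_pow_pos m
  simp only [mem_box, mapQuad]
  exact ⟨Nat.mod_lt _ this, Nat.mod_lt _ this, Nat.mod_lt _ this, Nat.mod_lt _ this⟩

lemma mapQuad_div_mem_box {m j : ℕ} {q : ℕ × ℕ × ℕ × ℕ} (hq : q ∈ box (2 ^ (m + j))) :
    mapQuad (· / 2 ^ m) q ∈ box (2 ^ j) := by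
  have hdiv : ∀ a < 2 ^ (m + j), a / 2 ^ m < 2 ^ j := fun a ha => by
    rwa [Nat.div_lt_iff_lt_mul (Nat.two_pow_pos m), ← pow_add, add_comm]
  simp only [mem_box, mapQuad] at hq ⊢
  exact ⟨hdiv _ hq.1, hdiv _ hq.2.1, hdiv _ hq.2.2.1, hdiv _ hq.2.2.2⟩

def xorOfSums (q : ℕ × ℕ × ℕ × ℕ) : ℕ :=
  (q.2.1 + q.1) ^^^ (q.2.2.1 + q.1) ^^^ (q.2.2.2 + q.1)

def sumOfXor (q : ℕ × ℕ × ℕ × ℕ) : ℕ :=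
  (q.2.1 ^^^ q.2.2.1 ^^^ q.2.2.2) + q.1

def solutionsMod (m : ℕ) : Finset (ℕ × ℕ × ℕ × ℕ) :=
  (box (2 ^ m)).filter fun q => xorOfSums q ≡ sumOfXor q [MOD 2 ^ m]

lemma xorOfSums_mapQuad_mod_modEq (m : ℕ) (q : ℕ × ℕ × ℕ × ℕ) :
    xorOfSums (mapQuad (· % 2 ^ m) q) ≡ xorOfSums q [MOD 2 ^ m] := by
  have h := fun a => Nat.mod_modEq a (2 ^ m)
  exact (((h _).add (h _)).xor ((h _).add (h _))).xor ((h _).add (h _))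

lemma sumOfXor_mapQuad_mod_modEq (m : ℕ) (q : ℕ × ℕ × ℕ × ℕ) :
    sumOfXor (mapQuad (· % 2 ^ m) q) ≡ sumOfXor q [MOD 2 ^ m] := by
  have h := fun a => Nat.mod_modEq a (2 ^ m)
  exact (((h _).xor (h _)).xor (h _)).add (h _)

lemma mapQuad_mod_mem_solutionsMod {m j : ℕ} {q : ℕ × ℕ × ℕ × ℕ}
    (hq : q ∈ solutionsMod (m + j)) : mapQuad (· % 2 ^ m) q ∈ solutionsMod m := by
  rw [solutionsMod, mem_filter, pow_add] at hq
  refine mem_filter.2 ⟨mapQuad_mod_mem_box m q, ?_⟩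
  exact (xorOfSums_mapQuad_mod_modEq m q).trans
    ((hq.2.of_mul_right _).trans (sumOfXor_mapQuad_mod_modEq m q).symm)

/-- The carries into bit `m` of `k + n`, `l + n`, `i + n` and `(k ⊕ l ⊕ i) + n`. -/
def carries (m : ℕ) (p : ℕ × ℕ × ℕ × ℕ) : ℕ × ℕ × ℕ × ℕ :=
  ((p.2.1 + p.1) / 2 ^ m, (p.2.2.1 + p.1) / 2 ^ m, (p.2.2.2 + p.1) / 2 ^ m, sumOfXor p / 2 ^ m)

def xorOfSumsWithCarries (c y : ℕ × ℕ × ℕ × ℕ) : ℕ :=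
  (y.2.1 + y.1 + c.1) ^^^ (y.2.2.1 + y.1 + c.2.1) ^^^ (y.2.2.2 + y.1 + c.2.2.1)

def SolvesWithCarriesMod (j : ℕ) (c y : ℕ × ℕ × ℕ × ℕ) : Prop :=
  xorOfSumsWithCarries c y ≡ sumOfXor y + c.2.2.2 [MOD 2 ^ j]

instance (j : ℕ) (c : ℕ × ℕ × ℕ × ℕ) : DecidablePred (SolvesWithCarriesMod j c) :=
  fun _ => inferInstanceAs (Decidable (Nat.ModEq _ _ _))

lemma carries_mem_box_two {m : ℕ} {p : ℕ × ℕ × ℕ × ℕ} (hp : p ∈ box (2 ^ m)) :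
    carries m p ∈ box 2 := by
  have hcarry : ∀ a < 2 ^ m, ∀ b < 2 ^ m, (a + b) / 2 ^ m < 2 := fun a ha b hb => by
    rw [Nat.div_lt_iff_lt_mul (Nat.two_pow_pos m)]
    omega
  rw [mem_box] at hp
  obtain ⟨hn, hk, hl, hi⟩ := hp
  simp only [mem_box, carries, sumOfXor]
  exact ⟨hcarry _ hk _ hn, hcarry _ hl _ hn, hcarry _ hi _ hn,
    hcarry _ (Nat.xor_lt_two_pow (Nat.xor_lt_two_pow hk hl) hi) _ hn⟩

lemma xorOfSums_div_two_pow (m : ℕ) (q : ℕ × ℕ × ℕ × ℕ) :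
    xorOfSums q / 2 ^ m =
      xorOfSumsWithCarries (carries m (mapQuad (· % 2 ^ m) q)) (mapQuad (· / 2 ^ m) q) := by
  obtain ⟨n, k, l, i⟩ := q
  simp only [xorOfSums, xorOfSumsWithCarries, carries, mapQuad]
  rw [Nat.xor_div_two_pow, Nat.xor_div_two_pow, Nat.add_div_eq_add_carry k,
    Nat.add_div_eq_add_carry l, Nat.add_div_eq_add_carry i]

lemma sumOfXor_div_two_pow (m : ℕ) (q : ℕ × ℕ × ℕ × ℕ) :
    sumOfXor q / 2 ^ m =
      sumOfXor (mapQuad (· / 2 ^ m) q) + (carries m (mapQuad (· % 2 ^ m) q)).2.2.2 := by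
  obtain ⟨n, k, l, i⟩ := q
  simp only [sumOfXor, carries, mapQuad]
  rw [Nat.add_div_eq_add_carry, Nat.xor_div_two_pow, Nat.xor_div_two_pow,
    Nat.xor_mod_two_pow, Nat.xor_mod_two_pow]

lemma solvesWithCarriesMod_of_modEq {m j : ℕ} {q : ℕ × ℕ × ℕ × ℕ}
    (hq : xorOfSums q ≡ sumOfXor q [MOD 2 ^ (m + j)]) :
    SolvesWithCarriesMod j (carries m (mapQuad (· % 2 ^ m) q)) (mapQuad (· / 2 ^ m) q) := by
  rw [SolvesWithCarriesMod, ← xorOfSums_div_two_pow, ← sumOfXor_div_two_pow, Nat.ModEq,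
    ← Nat.mod_mul_right_div_self, ← Nat.mod_mul_right_div_self, ← pow_add, hq]

lemma card_solutionsMod_add_le (m j N : ℕ)
    (hN : ∀ c ∈ box 2, #((box (2 ^ j)).filter (SolvesWithCarriesMod j c)) ≤ N) :
    #(solutionsMod (m + j)) ≤ N * #(solutionsMod m) := by
  refine card_le_mul_card_image_of_maps_to (fun _ => mapQuad_mod_mem_solutionsMod) N
    fun p hp => ?_
  have hp_box : p ∈ box (2 ^ m) := (mem_filter.1 hp).1
  refine le_trans (card_le_card_of_injOn (mapQuad (· / 2 ^ m)) (fun x hx => ?_) ?_)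
    (hN _ (carries_mem_box_two hp_box))
  · obtain ⟨hxs, rfl⟩ := mem_filter.1 (mem_coe.1 hx)
    rw [solutionsMod, mem_filter] at hxs
    exact mem_coe.2 <|
      mem_filter.2 ⟨mapQuad_div_mem_box hxs.1, solvesWithCarriesMod_of_modEq hxs.2⟩
  · intro x hx y hy hxy
    exact eq_of_mapQuad_mod_eq_of_mapQuad_div_eq
      ((mem_filter.1 hx).2.trans (mem_filter.1 hy).2.symm) hxy

/-- `(n, k, l, i) = (1, 0, 2, 5)` violates the identity on four bits whatever the
incoming carries are. -/
lemma card_filter_solvesWithCarriesMod_four_lt {c : ℕ × ℕ × ℕ × ℕ} (hc : c ∈ box 2) :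
    #((box (2 ^ 4)).filter (SolvesWithCarriesMod 4 c)) < 2 ^ 16 := by
  have hwitness : ∀ c ∈ box 2, ¬ SolvesWithCarriesMod 4 c (1, 0, 2, 5) := by decide
  calc #((box (2 ^ 4)).filter (SolvesWithCarriesMod 4 c)) < #(box (2 ^ 4)) :=
        card_lt_card (filter_ssubset.2 ⟨(1, 0, 2, 5), by simp [mem_box], hwitness c hc⟩)
    _ = 2 ^ 16 := by rw [card_box, ← pow_mul]

lemma card_solutionsMod_four_mul_le (q : ℕ) : #(solutionsMod (4 * q)) ≤ (2 ^ 16 - 1) ^ q := by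
  induction q with
  | zero => exact (card_filter_le _ _).trans (by simp [card_box])
  | succ q ih =>
    calc #(solutionsMod (4 * q + 4)) ≤ (2 ^ 16 - 1) * #(solutionsMod (4 * q)) :=
          card_solutionsMod_add_le _ 4 _ fun c hc =>
            Nat.le_sub_one_of_lt (card_filter_solvesWithCarriesMod_four_lt hc)
      _ ≤ (2 ^ 16 - 1) ^ (q + 1) := by
          rw [pow_succ' (2 ^ 16 - 1)]
          exact Nat.mul_le_mul_left _ ih

lemma card_solutionsMod_add_le_pow (m j : ℕ) :
    #(solutionsMod (m + j)) ≤ 2 ^ (4 * j) * #(solutionsMod m) :=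
  card_solutionsMod_add_le m j _ fun _ _ =>
    (card_filter_le _ _).trans (by rw [card_box, ← pow_mul, mul_comm])

end XorAdd

/-- For every `A ∈ ℕ`, the number of quadruples
`(n,k,l,i) ∈ {0,…,2^A−1}⁴` with `(k+n) ⊕ (l+n) ⊕ (i+n) = (k ⊕ l ⊕ i) + n` is at most
`(2^16 − 1)^{⌊A/4⌋} · 2^12`. -/
theorem count_xor_add_quadruples (A : ℕ) :
    ((Finset.range (2 ^ A) ×ˢ Finset.range (2 ^ A) ×ˢ
        Finset.range (2 ^ A) ×ˢ Finset.range (2 ^ A)).filter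
      (fun q : ℕ × ℕ × ℕ × ℕ =>
        (q.2.1 + q.1) ^^^ (q.2.2.1 + q.1) ^^^ (q.2.2.2 + q.1)
          = (q.2.1 ^^^ q.2.2.1 ^^^ q.2.2.2) + q.1)).card
    ≤ (2 ^ 16 - 1) ^ (A / 4) * 2 ^ 12 := by
  have hsub : _ ⊆ XorAdd.solutionsMod A :=
    monotone_filter_right (XorAdd.box (2 ^ A)) fun q _ h =>
      (h : XorAdd.xorOfSums q = XorAdd.sumOfXor q) ▸ rfl
  calc _ ≤ #(XorAdd.solutionsMod (4 * (A / 4) + A % 4)) := by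
        rw [Nat.div_add_mod]
        exact card_le_card hsub
    _ ≤ 2 ^ (4 * (A % 4)) * (2 ^ 16 - 1) ^ (A / 4) :=
        (XorAdd.card_solutionsMod_add_le_pow _ _).trans
          (Nat.mul_le_mul_left _ (XorAdd.card_solutionsMod_four_mul_le _))
    _ ≤ 2 ^ 12 * (2 ^ 16 - 1) ^ (A / 4) :=
        Nat.mul_le_mul_right _ (Nat.pow_le_pow_right two_pos (by omega))
    _ = _ := mul_comm _ _
end

section
/- There is an absolute constant C such that for every a ∈ ℕ, Σ_{t¹=0}^{a} Σ_{t²=t¹}^{∞} ∫_{J_{t¹}×J_{t²}} sup_{A ≥ a} sup_{n : |n|=A} (1/2^A) Σ_{s=0}^{t¹} n_s |Σ_{k=0}^{2^s−1} D_{n^{(s+1)}+k}(x¹) D_{n−(n^{(s+1)}+k)}(x²)| d(x¹,x²) ≤ C. -/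
open MeasureTheory

/-- Walsh–Dirichlet kernel `D_n = Σ_{k<n} ω_k`. -/
noncomputable def Dker (n : ℕ) (x : ℝ) : ℝ := ∑ k ∈ Finset.range n, walsh k x

/-- Triangular Fejér kernel `K△_n(x¹,x²) = (1/n) Σ_{k=1}^{n−1} D_k(x¹) D_{n−k}(x²)`. -/
noncomputable def Ktri (n : ℕ) (x1 x2 : ℝ) : ℝ :=
  (n : ℝ)⁻¹ * ∑ k ∈ Finset.Ico 1 n, Dker k x1 * Dker (n - k) x2

/-- The dyadic interval `I_a = [0, 2^{−a})`. -/
def Iset (a : ℕ) : Set ℝ := Set.Ico 0 (1 / 2 ^ a)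

/-- `J_k = I_k \ I_{k+1}`. -/
def Jset (k : ℕ) : Set ℝ := Iset k \ Iset (k + 1)

/-- Upper truncation `n^{(s)} = Σ_{j≥s} n_j 2^j`. -/
def upp (n s : ℕ) : ℕ := 2 ^ s * (n / 2 ^ s)

/-!
On `J_t` the Walsh function `ω_{2^t}` equals `-1`, so `D_{2^L} = 0` there for all `L > t`; writing
`m = 2^L + i` then gives `|D_m| ≤ 2^{t+1}` on `J_t` for every `m`. The second factor is bounded
trivially, as `n - n^{(s+1)} < 2^{s+1}`. Hence on `J_{t¹} × [0,1)` the integrand is at most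
`8^{t¹+1} / 2^a`, uniformly in `A ≥ a` and `n`. The sets `J_{t²}` are pairwise disjoint and lie in
`I_{t¹}` for `t² ≥ t¹`, so the `t²`-sum is at most `8^{t¹+1} 2^{-a} |J_{t¹} × I_{t¹}| ≤ 8 · 2^{t¹-a}`,
and summing over `t¹ ≤ a` gives the constant `16`.
-/

open Finset

lemma abs_walsh (n : ℕ) (x : ℝ) : |walsh n x| = 1 := by
  simp [walsh]

lemma abs_Dker_le (n : ℕ) (x : ℝ) : |Dker n x| ≤ n := by
  calc |Dker n x| ≤ ∑ k ∈ range n, |walsh k x| := abs_sum_le_sum_abs _ _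
    _ = n := by simp [abs_walsh]

lemma sum_range_testBit_mul_eq {n M N : ℕ} (hM : n < 2 ^ M) (hMN : M ≤ N) (g : ℕ → ℕ) :
    ∑ j ∈ range N, (n.testBit j).toNat * g j = ∑ j ∈ range M, (n.testBit j).toNat * g j := by
  refine (sum_subset (range_subset_range.2 hMN) fun j _ hj => ?_).symm
  have : n < 2 ^ j := hM.trans_le (Nat.pow_le_pow_right two_pos (by simpa using hj))
  simp [Nat.testBit_eq_false_of_lt this]

lemma walsh_eq_pow_sum_range {n M : ℕ} (hM : n < 2 ^ M) (x : ℝ) :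
    walsh n x = (-1) ^ ∑ j ∈ range M, (n.testBit j).toNat * dig x j := by
  rw [walsh]
  rcases le_total M n with h | h
  · rw [sum_range_testBit_mul_eq hM (h.trans n.le_succ)]
  · rw [sum_range_testBit_mul_eq Nat.lt_two_pow_self n.le_succ,
      sum_range_testBit_mul_eq Nat.lt_two_pow_self h]

lemma walsh_two_pow_add {L i : ℕ} (hi : i < 2 ^ L) (x : ℝ) :
    walsh (2 ^ L + i) x = walsh (2 ^ L) x * walsh i x := by
  have hlt : 2 ^ L + i < 2 ^ (L + 1) := by rw [pow_succ]; omega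
  rw [walsh_eq_pow_sum_range hlt, walsh_eq_pow_sum_range (M := L + 1) (by omega),
    walsh_eq_pow_sum_range (M := L + 1) (by omega), ← pow_add, ← sum_add_distrib]
  congr 1
  rw [sum_range_succ, sum_range_succ]
  have hlow : ∀ j ∈ range L, ((2 ^ L + i).testBit j).toNat * dig x j
      = ((2 ^ L).testBit j).toNat * dig x j + (i.testBit j).toNat * dig x j := by
    intro j hj
    have hj : j < L := mem_range.1 hj
    simp [Nat.testBit_two_pow_add_gt hj, Nat.testBit_two_pow_of_ne hj.ne']
  simp [sum_congr rfl hlow, Nat.testBit_two_pow_add_eq, Nat.testBit_eq_false_of_lt hi,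
    sum_add_distrib]

lemma Dker_two_pow_add {L i : ℕ} (hi : i ≤ 2 ^ L) (x : ℝ) :
    Dker (2 ^ L + i) x = Dker (2 ^ L) x + walsh (2 ^ L) x * Dker i x := by
  rw [Dker, sum_range_add, Dker, Dker, mul_sum]
  exact congrArg _ (sum_congr rfl fun k hk => walsh_two_pow_add ((mem_range.1 hk).trans_le hi) x)

lemma Dker_two_pow_succ (L : ℕ) (x : ℝ) :
    Dker (2 ^ (L + 1)) x = (1 + walsh (2 ^ L) x) * Dker (2 ^ L) x := by
  rw [pow_succ, mul_two, Dker_two_pow_add le_rfl]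
  ring

lemma mem_Jset_iff {t : ℕ} {x : ℝ} : x ∈ Jset t ↔ 1 / 2 ^ (t + 1) ≤ x ∧ x < 1 / 2 ^ t := by
  simp only [Jset, Iset, Set.mem_sdiff, Set.mem_Ico, not_and, not_lt]
  exact ⟨fun ⟨⟨h0, h1⟩, h2⟩ => ⟨h2 h0, h1⟩,
    fun ⟨h1, h2⟩ => ⟨⟨(by positivity : (0 : ℝ) ≤ 1 / 2 ^ (t + 1)).trans h1, h2⟩, fun _ => h1⟩⟩

lemma dig_eq_one_of_mem_Jset {t : ℕ} {x : ℝ} (hx : x ∈ Jset t) : dig x t = 1 := by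
  obtain ⟨h1, h2⟩ := mem_Jset_iff.1 hx
  have hfloor : ⌊x * 2 ^ (t + 1)⌋ = 1 := by
    rw [Int.floor_eq_iff, pow_succ]
    rw [div_le_iff₀ (by positivity), pow_succ] at h1
    rw [lt_div_iff₀ (by positivity)] at h2
    push_cast
    constructor <;> linarith
  simp [dig, hfloor]

lemma walsh_two_pow_of_mem_Jset {t : ℕ} {x : ℝ} (hx : x ∈ Jset t) : walsh (2 ^ t) x = -1 := by
  rw [walsh_eq_pow_sum_range (M := t + 1) (Nat.pow_lt_pow_succ one_lt_two), sum_range_succ,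
    sum_eq_zero fun j hj => by simp [Nat.testBit_two_pow_of_ne (mem_range.1 hj).ne'],
    Nat.testBit_two_pow_self, dig_eq_one_of_mem_Jset hx]
  norm_num

lemma Dker_two_pow_eq_zero_of_mem_Jset {t L : ℕ} {x : ℝ} (hx : x ∈ Jset t) (hL : t < L) :
    Dker (2 ^ L) x = 0 := by
  induction L, hL using Nat.le_induction with
  | base => rw [Dker_two_pow_succ, walsh_two_pow_of_mem_Jset hx]; ring
  | succ L _ ih => rw [Dker_two_pow_succ, ih, mul_zero]

lemma abs_Dker_le_of_mem_Jset {t : ℕ} {x : ℝ} (hx : x ∈ Jset t) (m : ℕ) :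
    |Dker m x| ≤ 2 ^ (t + 1) := by
  induction m using Nat.strong_induction_on with
  | _ m ih =>
  rcases lt_or_ge m (2 ^ (t + 1)) with hm | hm
  · exact (abs_Dker_le m x).trans (by exact_mod_cast hm.le)
  · -- `m = 2^L + i` with `t < L` and `i < 2^L`; since `D_{2^L} = 0` on `J_t`, `|D_m| = |D_i|`
    set L := Nat.log 2 m
    have hm0 : m ≠ 0 := by have := Nat.one_le_two_pow (n := t + 1); omega
    have hL : t < L := Nat.le_log_of_pow_le one_lt_two hm
    have hlow : 2 ^ L ≤ m := Nat.pow_log_le_self 2 hm0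
    have hhigh : m < 2 ^ L * 2 := pow_succ 2 L ▸ Nat.lt_pow_succ_log_self one_lt_two m
    have hsplit : m = 2 ^ L + (m - 2 ^ L) := by omega
    rw [hsplit, Dker_two_pow_add (by omega), Dker_two_pow_eq_zero_of_mem_Jset hx hL, zero_add,
      abs_mul, abs_walsh, one_mul]
    exact ih _ (by have := Nat.one_le_two_pow (n := L); omega)

lemma sub_upp_lt_two_pow (n s : ℕ) : n - upp n s < 2 ^ s := by
  have := Nat.div_add_mod n (2 ^ s)
  have := Nat.mod_lt n (pow_pos two_pos s)
  unfold upp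
  omega

noncomputable def triPart (t n : ℕ) (x1 x2 : ℝ) : ℝ :=
  ∑ s ∈ range (t + 1), ((n.testBit s).toNat : ℝ) *
    |∑ k ∈ range (2 ^ s), Dker (upp n (s + 1) + k) x1 * Dker (n - (upp n (s + 1) + k)) x2|

lemma triPart_nonneg (t n : ℕ) (x1 x2 : ℝ) : 0 ≤ triPart t n x1 x2 := by
  unfold triPart
  positivity

lemma sum_range_two_mul_four_pow_le (t : ℕ) :
    ∑ s ∈ range (t + 1), (2 * 4 ^ s : ℝ) ≤ 4 ^ (t + 1) := by
  induction t with
  | zero => norm_num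
  | succ t ih =>
    rw [sum_range_succ, pow_succ 4 (t + 1)]
    linarith [pow_pos (by norm_num : (0 : ℝ) < 4) (t + 1)]

lemma triPart_le_of_mem_Jset {t : ℕ} {x1 : ℝ} (hx1 : x1 ∈ Jset t) (n : ℕ) (x2 : ℝ) :
    triPart t n x1 x2 ≤ 8 ^ (t + 1) := by
  have hterm : ∀ s, ((n.testBit s).toNat : ℝ) *
      |∑ k ∈ range (2 ^ s), Dker (upp n (s + 1) + k) x1 * Dker (n - (upp n (s + 1) + k)) x2|
      ≤ ∑ _k ∈ range (2 ^ s), (2 ^ (t + 1) * 2 ^ (s + 1) : ℝ) := by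
    intro s
    have hbit : ((n.testBit s).toNat : ℝ) ≤ 1 := by cases n.testBit s <;> simp
    refine (mul_le_of_le_one_left (abs_nonneg _) hbit).trans ((abs_sum_le_sum_abs _ _).trans ?_)
    gcongr with k
    rw [abs_mul]
    have hx2 : |Dker (n - (upp n (s + 1) + k)) x2| ≤ 2 ^ (s + 1) := by
      have := sub_upp_lt_two_pow n (s + 1)
      exact (abs_Dker_le _ x2).trans (by exact_mod_cast (show _ ≤ 2 ^ (s + 1) by omega))
    exact mul_le_mul (abs_Dker_le_of_mem_Jset hx1 _) hx2 (abs_nonneg _) (by positivity)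
  calc triPart t n x1 x2
        ≤ ∑ s ∈ range (t + 1), ∑ _k ∈ range (2 ^ s), (2 ^ (t + 1) * 2 ^ (s + 1) : ℝ) :=
        sum_le_sum fun s _ => hterm s
    _ = 2 ^ (t + 1) * ∑ s ∈ range (t + 1), (2 * 4 ^ s : ℝ) := by
        rw [mul_sum]
        refine sum_congr rfl fun s _ => ?_
        rw [sum_const, card_range, nsmul_eq_mul, show (4 : ℝ) = 2 * 2 by norm_num, mul_pow]
        push_cast
        ring
    _ ≤ 2 ^ (t + 1) * 4 ^ (t + 1) := by gcongr; exact sum_range_two_mul_four_pow_le t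
    _ = 8 ^ (t + 1) := by rw [← mul_pow]; norm_num

lemma maximal_triPart_le_of_mem_Jset {a t : ℕ} {x1 : ℝ} (hx1 : x1 ∈ Jset t) (x2 : ℝ) :
    ⨆ (A : ℕ) (_ : a ≤ A) (n : ℕ) (_ : 2 ^ A ≤ n ∧ n < 2 ^ (A + 1)),
      ENNReal.ofReal ((2 ^ A : ℝ)⁻¹ * triPart t n x1 x2)
      ≤ ENNReal.ofReal (8 ^ (t + 1) / 2 ^ a) := by
  refine iSup₂_le fun A hA => iSup₂_le fun n _ => ENNReal.ofReal_le_ofReal ?_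
  rw [div_eq_inv_mul]
  exact mul_le_mul (inv_anti₀ (by positivity) (pow_le_pow_right₀ one_le_two hA))
    (triPart_le_of_mem_Jset hx1 n x2) (triPart_nonneg t n x1 x2) (by positivity)

lemma Iset_subset_Iset {t u : ℕ} (h : t ≤ u) : Iset u ⊆ Iset t :=
  Set.Ico_subset_Ico_right (one_div_pow_le_one_div_pow_of_le one_le_two h)

lemma Jset_subset_Iset (t : ℕ) : Jset t ⊆ Iset t := Set.sdiff_subset

lemma measurableSet_Jset (t : ℕ) : MeasurableSet (Jset t) :=
  measurableSet_Ico.diff measurableSet_Ico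

lemma disjoint_Jset {t u : ℕ} (h : t ≠ u) : Disjoint (Jset t) (Jset u) := by
  wlog htu : t < u generalizing t u
  · exact (this h.symm (h.lt_or_gt.resolve_left htu)).symm
  exact Set.disjoint_sdiff_left.mono_right
    ((Jset_subset_Iset u).trans (Iset_subset_Iset htu))

lemma volume_Iset (t : ℕ) : volume (Iset t) = ENNReal.ofReal (1 / 2 ^ t) := by
  simp [Iset, Real.volume_Ico]

lemma tsum_setLIntegral_prod_Jset_le (f : ℝ × ℝ → ENNReal) {S : Set ℝ} (hS : MeasurableSet S)
    (t : ℕ) :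
    ∑' u : {m : ℕ // t ≤ m}, ∫⁻ x in S ×ˢ Jset u, f x ≤ ∫⁻ x in S ×ˢ Iset t, f x := by
  rw [← lintegral_iUnion (s := fun u : {m : ℕ // t ≤ m} => S ×ˢ Jset u)
    (fun u => hS.prod (measurableSet_Jset u))
    fun u v huv => Set.disjoint_prod.2 (Or.inr (disjoint_Jset (Subtype.coe_ne_coe.2 huv)))]
  refine lintegral_mono_set (Set.iUnion_subset fun u => Set.prod_mono le_rfl ?_)
  exact (Jset_subset_Iset u).trans (Iset_subset_Iset u.2)

lemma tsum_setLIntegral_maximal_triPart_le (a t : ℕ) :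
    ∑' u : {m : ℕ // t ≤ m}, ∫⁻ x in Jset t ×ˢ Jset u,
      ⨆ (A : ℕ) (_ : a ≤ A) (n : ℕ) (_ : 2 ^ A ≤ n ∧ n < 2 ^ (A + 1)),
        ENNReal.ofReal ((2 ^ A : ℝ)⁻¹ * triPart t n x.1 x.2)
      ≤ ENNReal.ofReal (8 * 2 ^ t / 2 ^ a) := by
  calc _ ≤ ∫⁻ x in Jset t ×ˢ Iset t,
          ⨆ (A : ℕ) (_ : a ≤ A) (n : ℕ) (_ : 2 ^ A ≤ n ∧ n < 2 ^ (A + 1)),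
            ENNReal.ofReal ((2 ^ A : ℝ)⁻¹ * triPart t n x.1 x.2) :=
        tsum_setLIntegral_prod_Jset_le _ (measurableSet_Jset t) t
    _ ≤ ∫⁻ _ in Jset t ×ˢ Iset t, ENNReal.ofReal (8 ^ (t + 1) / 2 ^ a) :=
        setLIntegral_mono measurable_const fun x hx => maximal_triPart_le_of_mem_Jset hx.1 x.2
    _ ≤ ENNReal.ofReal (8 ^ (t + 1) / 2 ^ a) *
          (ENNReal.ofReal (1 / 2 ^ t) * ENNReal.ofReal (1 / 2 ^ t)) := by
        rw [setLIntegral_const, Measure.volume_eq_prod, Measure.prod_prod, ← volume_Iset]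
        gcongr
        exact Jset_subset_Iset t
    _ = ENNReal.ofReal (8 * 2 ^ t / 2 ^ a) := by
        rw [← ENNReal.ofReal_mul (by positivity), ← ENNReal.ofReal_mul (by positivity)]
        congr 1
        rw [show (8 : ℝ) = 2 ^ 3 by norm_num, ← pow_mul]
        field_simp
        ring

lemma sum_range_ofReal_eight_mul_two_pow_div_le (a : ℕ) :
    ∑ t ∈ range (a + 1), ENNReal.ofReal (8 * 2 ^ t / 2 ^ a) ≤ ENNReal.ofReal 16 := by
  rw [← ENNReal.ofReal_sum_of_nonneg fun t _ => by positivity]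
  refine ENNReal.ofReal_le_ofReal ?_
  rw [← sum_div, ← mul_sum, div_le_iff₀ (by positivity), geom_sum_eq (by norm_num) (a + 1),
    pow_succ]
  norm_num
  linarith [pow_pos (by norm_num : (0 : ℝ) < 2) a]

/-- First part (`0 ≤ s ≤ t¹`) of the maximal triangular kernel estimate: the double sum over `t¹ ≤ a`, `t² ≥ t¹` of the integrals over `J_{t¹}×J_{t²}` is bounded by an absolute constant. -/
theorem sup_kernel_int_part1 :
    ∃ C : ℝ, 0 < C ∧ ∀ a : ℕ,
      ∑ t1 ∈ Finset.range (a + 1), ∑' t2 : {m : ℕ // t1 ≤ m},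
        ∫⁻ x in Jset t1 ×ˢ Jset (t2 : ℕ),
          ⨆ (A : ℕ) (_ : a ≤ A) (n : ℕ) (_ : 2 ^ A ≤ n ∧ n < 2 ^ (A + 1)),
            ENNReal.ofReal ((2 ^ A : ℝ)⁻¹ *
              ∑ s ∈ Finset.range (t1 + 1),
                ((n.testBit s).toNat : ℝ) *
                  |∑ k ∈ Finset.range (2 ^ s),
                    Dker (upp n (s + 1) + k) x.1 * Dker (n - (upp n (s + 1) + k)) x.2|)
      ≤ ENNReal.ofReal C := by
  refine ⟨16, by norm_num, fun a => ?_⟩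
  calc _ ≤ ∑ t ∈ range (a + 1), ENNReal.ofReal (8 * 2 ^ t / 2 ^ a) :=
        sum_le_sum fun t _ => tsum_setLIntegral_maximal_triPart_le a t
    _ ≤ ENNReal.ofReal 16 := sum_range_ofReal_eight_mul_two_pow_div_le a
end
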